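/- arXiv:1301.0277 — 6 statements merged into one kernel-verified Lean document; each statement's English description precedes it below -/
import Mathlib

section
/- For the region A(ξ) = {(x,y) ∈ (0,1]² : x + y > 1, xy ≥ 1/ξ}, the Lebesgue measure of A(ξ) equals 0 if 0 < ξ ≤ 1; equals 1 − (log ξ + 1)/ξ if 1 ≤ ξ ≤ 4; and equals 1 − 1/ξ − (1/2)√(1 − 4/ξ) + (2/ξ)·log((1 + √(1 − 4/ξ))/2) if ξ ≥ 4. -/
/-!
By Fubini, the measure of `A(ξ)` is the integral over `x ∈ (0,1]` of the length of the vertical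
section `{y : max (1 - x) (1/(ξx)) ≤ y ≤ 1}`, i.e. of `(min x (1 - 1/(ξx)))⁺`. This vanishes for
`x ≤ 1/ξ`, and beyond `1/ξ` the minimum is `x` exactly where `ξx² - ξx + 1 ≤ 0`, that is, between
the roots `(1 ± √(1 - 4/ξ))/2`, which exist only for `ξ ≥ 4`. The integral is then elementary.
-/

open MeasureTheory

/-- The region `A(ξ) = {(x,y) ∈ (0,1]² : x + y > 1, xy ≥ 1/ξ}`. -/
def regionA (ξ : ℝ) : Set (ℝ × ℝ) :=
  {p | p.1 ∈ Set.Ioc (0:ℝ) 1 ∧ p.2 ∈ Set.Ioc (0:ℝ) 1 ∧ 1 < p.1 + p.2 ∧ 1 / ξ ≤ p.1 * p.2}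

open Set Real

noncomputable def sliceLength (ξ x : ℝ) : ℝ := max 0 (min x (1 - 1 / (ξ * x)))

theorem measurableSet_regionA (ξ : ℝ) : MeasurableSet (regionA ξ) :=
  (measurableSet_Ioc.preimage measurable_fst).inter <|
    (measurableSet_Ioc.preimage measurable_snd).inter <|
      (measurableSet_lt measurable_const (measurable_fst.add measurable_snd)).inter
        (measurableSet_le measurable_const (measurable_fst.mul measurable_snd))

theorem Real.volume_Ioc_inter_Ici (a b c : ℝ) :
    volume (Ioc a b ∩ Ici c) = ENNReal.ofReal (b - max a c) := by
  refine le_antisymm ?_ ?_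
  · calc volume (Ioc a b ∩ Ici c) ≤ volume (Icc (max a c) b) :=
          measure_mono fun y hy => mem_Icc.2 ⟨max_le hy.1.1.le hy.2, hy.1.2⟩
      _ = _ := Real.volume_Icc
  · calc ENNReal.ofReal (b - max a c) = volume (Ioc (max a c) b) := Real.volume_Ioc.symm
      _ ≤ _ := measure_mono fun y hy =>
          mem_inter (mem_Ioc.2 ⟨(le_max_left a c).trans_lt hy.1, hy.2⟩)
            (mem_Ici.2 ((le_max_right a c).trans hy.1.le))

theorem preimage_mk_regionA {ξ x : ℝ} (hξ : 0 < ξ) (hx : x ∈ Ioc (0:ℝ) 1) :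
    Prod.mk x ⁻¹' regionA ξ = Ioc (1 - x) 1 ∩ Ici (1 / (ξ * x)) := by
  have hξx : 0 < ξ * x := mul_pos hξ hx.1
  ext y
  simp only [regionA, mem_preimage, mem_ofPred_eq, mem_inter_iff, mem_Ioc, mem_Ici]
  rw [div_le_iff₀ hξx, div_le_iff₀ hξ]
  constructor
  · rintro ⟨-, ⟨-, hy1⟩, hxy, hprod⟩
    exact ⟨⟨by linarith, hy1⟩, by linarith⟩
  · rintro ⟨⟨hxy, hy1⟩, hprod⟩
    exact ⟨hx, ⟨pos_of_mul_pos_left (one_pos.trans_le hprod) hξx.le, hy1⟩, by linarith,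
      by linarith⟩

theorem volume_preimage_mk_regionA {ξ : ℝ} (hξ : 0 < ξ) (x : ℝ) :
    volume (Prod.mk x ⁻¹' regionA ξ) =
      (Ioc (0:ℝ) 1).indicator (fun x => ENNReal.ofReal (sliceLength ξ x)) x := by
  by_cases hx : x ∈ Ioc (0:ℝ) 1
  · rw [indicator_of_mem hx, preimage_mk_regionA hξ hx, Real.volume_Ioc_inter_Ici, sliceLength,
      ENNReal.ofReal_max, ENNReal.ofReal_zero, zero_max]
    congr 1
    rw [← min_sub_sub_left, sub_sub_cancel]
  · rw [indicator_of_notMem hx]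
    exact measure_mono_null (fun y hy => hx hy.1) measure_empty

theorem sliceLength_nonneg (ξ x : ℝ) : 0 ≤ sliceLength ξ x := le_max_left _ _

theorem intervalIntegrable_sliceLength (ξ a b : ℝ) :
    IntervalIntegrable (sliceLength ξ) volume a b := by
  refine (continuous_abs.intervalIntegrable a b).mono_fun' (by unfold sliceLength; fun_prop)
    (ae_of_all _ fun x => ?_)
  simp only [Real.norm_of_nonneg (sliceLength_nonneg ξ x)]
  exact max_le (abs_nonneg x) ((min_le_left _ _).trans (le_abs_self x))

theorem volume_regionA_eq_integral {ξ : ℝ} (hξ : 0 < ξ) :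
    volume (regionA ξ) = ENNReal.ofReal (∫ x in (0:ℝ)..1, sliceLength ξ x) := by
  rw [intervalIntegral.integral_of_le zero_le_one,
    ofReal_integral_eq_lintegral_ofReal (intervalIntegrable_sliceLength ξ 0 1).1
      (ae_of_all _ (sliceLength_nonneg ξ)),
    ← lintegral_indicator measurableSet_Ioc, Measure.volume_eq_prod,
    Measure.prod_apply (measurableSet_regionA ξ)]
  simp only [volume_preimage_mk_regionA hξ]

theorem sliceLength_eq_zero {ξ x : ℝ} (hξ : 0 < ξ) (hx : x ≤ 1 / ξ) : sliceLength ξ x = 0 := by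
  refine max_eq_left ?_
  rcases le_or_gt x 0 with hx0 | hx0
  · exact (min_le_left _ _).trans hx0
  · refine (min_le_right _ _).trans (sub_nonpos.2 ?_)
    rw [le_div_iff₀ (mul_pos hξ hx0), one_mul]
    rwa [le_div_iff₀ hξ, mul_comm] at hx

theorem sliceLength_eq_one_sub {ξ x : ℝ} (hξ : 0 < ξ) (hx : 1 / ξ ≤ x)
    (hq : 0 ≤ ξ * x ^ 2 - ξ * x + 1) : sliceLength ξ x = 1 - 1 / (ξ * x) := by
  have hξx : 1 ≤ ξ * x := by rwa [div_le_iff₀ hξ, mul_comm] at hx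
  have hx0 : 0 < ξ * x := one_pos.trans_le hξx
  have hmin : 1 - 1 / (ξ * x) ≤ x := by
    rw [sub_le_comm, le_div_iff₀ hx0]
    nlinarith
  rw [sliceLength, min_eq_right hmin, max_eq_right (sub_nonneg.2 ((div_le_one hx0).2 hξx))]

theorem sliceLength_eq_self {ξ x : ℝ} (hξ : 0 < ξ) (hq : ξ * x ^ 2 - ξ * x + 1 ≤ 0) :
    sliceLength ξ x = x := by
  have hx0 : 0 < x := by nlinarith [sq_nonneg x]
  have hmin : x ≤ 1 - 1 / (ξ * x) := by
    rw [le_sub_comm, div_le_iff₀ (mul_pos hξ hx0)]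
    nlinarith
  rw [sliceLength, min_eq_left hmin, max_eq_right hx0.le]

theorem integral_one_sub_one_div_mul (ξ : ℝ) {a b : ℝ} (ha : 0 < a) (hb : 0 < b) :
    ∫ x in a..b, (1 - 1 / (ξ * x)) = b - a - log (b / a) / ξ := by
  have hinv : IntervalIntegrable (fun x : ℝ => x⁻¹) volume a b :=
    intervalIntegral.intervalIntegrable_inv
      (fun x hx => ((lt_min ha hb).trans_le hx.1).ne') continuousOn_id
  simp only [one_div, mul_inv]
  rw [intervalIntegral.integral_sub intervalIntegrable_const (hinv.const_mul _),
    intervalIntegral.integral_const, intervalIntegral.integral_const_mul,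
    integral_inv_of_pos ha hb, smul_eq_mul, mul_one]
  ring

section Integrals

variable {ξ a b : ℝ}

theorem integral_sliceLength_eq_zero (hξ : 0 < ξ) (ha : a ≤ 1 / ξ) (hb : b ≤ 1 / ξ) :
    ∫ x in a..b, sliceLength ξ x = 0 := by
  rw [intervalIntegral.integral_congr (g := fun _ => 0)
    fun x hx => sliceLength_eq_zero hξ (hx.2.trans (max_le ha hb))]
  exact intervalIntegral.integral_zero

theorem integral_sliceLength_of_quadratic_nonneg (hξ : 0 < ξ) (hab : a ≤ b) (ha : 1 / ξ ≤ a)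
    (hq : ∀ x ∈ Icc a b, 0 ≤ ξ * x ^ 2 - ξ * x + 1) :
    ∫ x in a..b, sliceLength ξ x = b - a - log (b / a) / ξ := by
  rw [intervalIntegral.integral_congr (g := fun x => 1 - 1 / (ξ * x)) fun x hx => ?_,
    integral_one_sub_one_div_mul ξ ((one_div_pos.2 hξ).trans_le ha)
      ((one_div_pos.2 hξ).trans_le (ha.trans hab))]
  rw [uIcc_of_le hab] at hx
  exact sliceLength_eq_one_sub hξ (ha.trans hx.1) (hq x hx)

theorem integral_sliceLength_of_quadratic_nonpos (hξ : 0 < ξ) (hab : a ≤ b)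
    (hq : ∀ x ∈ Icc a b, ξ * x ^ 2 - ξ * x + 1 ≤ 0) :
    ∫ x in a..b, sliceLength ξ x = (b ^ 2 - a ^ 2) / 2 := by
  rw [intervalIntegral.integral_congr (g := fun x => x) fun x hx => ?_, integral_id]
  rw [uIcc_of_le hab] at hx
  exact sliceLength_eq_self hξ (hq x hx)

theorem integral_sliceLength_of_le_one (hξ : 0 < ξ) (h1 : ξ ≤ 1) :
    ∫ x in (0:ℝ)..1, sliceLength ξ x = 0 :=
  integral_sliceLength_eq_zero hξ (by positivity) ((one_le_div hξ).2 h1)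

theorem integral_sliceLength_of_le_four (h1 : 1 ≤ ξ) (h4 : ξ ≤ 4) :
    ∫ x in (0:ℝ)..1, sliceLength ξ x = 1 - (log ξ + 1) / ξ := by
  have hξ : 0 < ξ := one_pos.trans_le h1
  have hc : 1 / ξ ≤ 1 := (div_le_one hξ).2 h1
  have I := intervalIntegrable_sliceLength ξ
  rw [← intervalIntegral.integral_add_adjacent_intervals (I 0 (1 / ξ)) (I (1 / ξ) 1),
    integral_sliceLength_eq_zero hξ (by positivity) le_rfl,
    integral_sliceLength_of_quadratic_nonneg hξ hc le_rfl
      fun x _ => by nlinarith [mul_nonneg hξ.le (sq_nonneg (x - 1 / 2))],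
    one_div_one_div]
  ring

theorem integral_sliceLength_of_roots (ha : 0 < a) (hab : a ≤ b) (hsum : a + b = 1)
    (hprod : a * b = 1 / ξ) :
    ∫ x in (0:ℝ)..1, sliceLength ξ x = 1 - 1 / ξ - (b - a) / 2 + 2 * log b / ξ := by
  have hb : 0 < b := ha.trans_le hab
  have hξ : 0 < ξ := one_div_pos.1 (hprod ▸ mul_pos ha hb)
  have hb1 : b ≤ 1 := by linarith
  have hca : 1 / ξ ≤ a := hprod ▸ mul_le_of_le_one_right ha.le hb1
  have hξab : ξ * (a * b) = 1 := by rw [hprod]; field_simp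
  have hfactor (x : ℝ) : ξ * x ^ 2 - ξ * x + 1 = ξ * ((x - a) * (x - b)) := by
    linear_combination (ξ * x) * hsum - hξab
  have hq_left : ∀ x ∈ Icc (1 / ξ) a, 0 ≤ ξ * x ^ 2 - ξ * x + 1 := fun x hx => by
    rw [hfactor]
    exact mul_nonneg hξ.le
      (mul_nonneg_of_nonpos_of_nonpos (by linarith [hx.2]) (by linarith [hx.2]))
  have hq_mid : ∀ x ∈ Icc a b, ξ * x ^ 2 - ξ * x + 1 ≤ 0 := fun x hx => by
    rw [hfactor]
    exact mul_nonpos_of_nonneg_of_nonpos hξ.le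
      (mul_nonpos_of_nonneg_of_nonpos (by linarith [hx.1]) (by linarith [hx.2]))
  have hq_right : ∀ x ∈ Icc b 1, 0 ≤ ξ * x ^ 2 - ξ * x + 1 := fun x hx => by
    rw [hfactor]
    exact mul_nonneg hξ.le (mul_nonneg (by linarith [hx.1]) (by linarith [hx.1]))
  have I := intervalIntegrable_sliceLength ξ
  rw [← intervalIntegral.integral_add_adjacent_intervals (I 0 a) (I a 1),
    ← intervalIntegral.integral_add_adjacent_intervals (I 0 (1 / ξ)) (I (1 / ξ) a),
    ← intervalIntegral.integral_add_adjacent_intervals (I a b) (I b 1),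
    integral_sliceLength_eq_zero hξ (by positivity) le_rfl,
    integral_sliceLength_of_quadratic_nonneg hξ hca le_rfl hq_left,
    integral_sliceLength_of_quadratic_nonpos hξ hab hq_mid,
    integral_sliceLength_of_quadratic_nonneg hξ hb1 (hca.trans hab) hq_right]
  have hla : a / (1 / ξ) = b⁻¹ := by
    field_simp
    linear_combination hξab
  rw [hla, log_inv, one_div b, log_inv]
  linear_combination ((b - a) / 2) * hsum

theorem integral_sliceLength_of_four_le (h4 : 4 ≤ ξ) :
    ∫ x in (0:ℝ)..1, sliceLength ξ x = 1 - 1 / ξ - (1 / 2) * √(1 - 4 / ξ) +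
      (2 / ξ) * log ((1 + √(1 - 4 / ξ)) / 2) := by
  have hξ : 0 < ξ := by linarith
  set s := √(1 - 4 / ξ)
  have hs0 : 0 ≤ s := sqrt_nonneg _
  have hs2 : s ^ 2 = 1 - 4 / ξ := sq_sqrt (by rw [sub_nonneg, div_le_one hξ]; exact h4)
  have hs1 : s < 1 := by nlinarith [div_pos four_pos hξ]
  rw [integral_sliceLength_of_roots (a := (1 - s) / 2) (b := (1 + s) / 2) (by linarith)
    (by linarith) (by ring) (by linear_combination (-1 / 4 : ℝ) * hs2)]
  ring

end Integrals

/-- Explicit formula for the Lebesgue measure of `A(ξ)`. -/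
theorem measure_regionA (ξ : ℝ) (hξ : 0 < ξ) :
    (ξ ≤ 1 → volume (regionA ξ) = 0) ∧
    (1 ≤ ξ → ξ ≤ 4 →
      volume (regionA ξ) = ENNReal.ofReal (1 - (Real.log ξ + 1) / ξ)) ∧
    (4 ≤ ξ →
      volume (regionA ξ) = ENNReal.ofReal
        (1 - 1 / ξ - (1 / 2) * Real.sqrt (1 - 4 / ξ) +
          (2 / ξ) * Real.log ((1 + Real.sqrt (1 - 4 / ξ)) / 2))) := by
  rw [volume_regionA_eq_integral hξ]
  refine ⟨fun h1 => ?_, fun h1 h4 => ?_, fun h4 => ?_⟩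
  · rw [integral_sliceLength_of_le_one hξ h1, ENNReal.ofReal_zero]
  · rw [integral_sliceLength_of_le_four h1 h4]
  · rw [integral_sliceLength_of_four_le h4]
end

section
/- The map T(x,y) = (y, κ(x,y)·y − x), where κ(x,y) = ⌊(1+x)/y⌋, maps the triangle T = {(x,y) ∈ (0,1]² : x + y > 1} bijectively onto itself and preserves two-dimensional Lebesgue measure. -/
/-!
On the piece of the triangle where `κ = k`, the map `T` is the linear map `(x, y) ↦ (y, k y - x)`
of determinant `1`, so it preserves area piece by piece; since `T` is injective on the triangle,
the images of the pieces are disjoint and the areas add up. Bijectivity comes from the identity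
`κ(T p) = κ(p)`, which makes `swap ∘ T ∘ swap` an inverse of `T`.
-/

open MeasureTheory

/-- The Farey triangle `{(x,y) ∈ (0,1]² : x + y > 1}`. -/
def fareyTriangle : Set (ℝ × ℝ) :=
  {p | p.1 ∈ Set.Ioc (0:ℝ) 1 ∧ p.2 ∈ Set.Ioc (0:ℝ) 1 ∧ 1 < p.1 + p.2}

/-- The BCZ transformation `T(x,y) = (y, ⌊(1+x)/y⌋ y - x)`. -/
noncomputable def bczMap (p : ℝ × ℝ) : ℝ × ℝ :=
  (p.2, (⌊(1 + p.1) / p.2⌋ : ℝ) * p.2 - p.1)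

/-- `𝒯_k`, the subset of the Farey triangle where `⌊(1+x)/y⌋ = k`. -/
def fareyTriangleK (k : ℤ) : Set (ℝ × ℝ) :=
  {p ∈ fareyTriangle | ⌊(1 + p.1) / p.2⌋ = k}

open Set Function

theorem measure_image_eq_of_injOn_of_eq_piecewise {α β ι : Type*} [MeasurableSpace α]
    [MeasurableSpace β] [Countable ι] [MeasurableSpace ι] [MeasurableSingletonClass ι]
    {μ : Measure α} {ν : Measure β} {f : α → β} {s : Set α} {κ : α → ι} {g : ι → α → β}
    (hs : MeasurableSet s) (hκ : Measurable κ) (hf : InjOn f s) (hfg : ∀ x ∈ s, f x = g (κ x) x)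
    (hg : ∀ k, MeasurableEmbedding (g k)) (hgμ : ∀ k t, ν (g k '' t) = μ t) :
    ν (f '' s) = μ s := by
  set P : ι → Set α := fun k => s ∩ κ ⁻¹' {k}
  have hs_eq : s = ⋃ k, P k := by
    ext x; simp [P]
  have hP_meas (k : ι) : MeasurableSet (P k) := hs.inter (hκ (measurableSet_singleton k))
  have hP_disj : Pairwise (Disjoint on P) := fun i j hij =>
    disjoint_left.2 fun x hi hj => hij (hi.2.symm.trans hj.2)
  have hP_sub (k : ι) : P k ⊆ s := inter_subset_left
  have hf_eq (k : ι) : f '' P k = g k '' P k :=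
    image_congr fun x hx => (hfg x hx.1).trans (by rw [hx.2])
  have hfP_disj : Pairwise (Disjoint on fun k => f '' P k) := fun i j hij => by
    simp only [onFun, disjoint_iff_inter_eq_empty,
      ← hf.image_inter (hP_sub i) (hP_sub j), (hP_disj hij).inter_eq, image_empty]
  calc ν (f '' s) = ν (⋃ k, f '' P k) := by rw [← image_iUnion, ← hs_eq]
    _ = ∑' k, ν (f '' P k) := measure_iUnion hfP_disj fun k => by
          rw [hf_eq]; exact (hg k).measurableSet_image.2 (hP_meas k)
    _ = ∑' k, μ (P k) := by simp only [hf_eq, hgμ]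
    _ = μ s := by rw [← measure_iUnion hP_disj hP_meas, ← hs_eq]

noncomputable def bczLinearEquiv (k : ℤ) : (ℝ × ℝ) ≃L[ℝ] (ℝ × ℝ) :=
  LinearEquiv.toContinuousLinearEquiv
    { toFun := fun p => (p.2, k * p.2 - p.1)
      map_add' := fun p q => by ext <;> simp; ring
      map_smul' := fun c p => by ext <;> simp; ring
      invFun := fun q => (k * q.1 - q.2, q.1)
      left_inv := fun p => by ext <;> simp
      right_inv := fun q => by ext <;> simp }

theorem det_bczLinearEquiv (k : ℤ) :
    LinearMap.det (bczLinearEquiv k : (ℝ × ℝ) →ₗ[ℝ] ℝ × ℝ) = 1 := by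
  rw [← LinearMap.det_toMatrix (Module.Basis.finTwoProd ℝ), Matrix.det_fin_two]
  simp [LinearMap.toMatrix_apply, bczLinearEquiv, Module.Basis.coe_finTwoProd_repr]

theorem volume_image_bczLinearEquiv (k : ℤ) (s : Set (ℝ × ℝ)) :
    volume (bczLinearEquiv k '' s) = volume s := by
  simp [det_bczLinearEquiv]

theorem bczMap_eq_bczLinearEquiv (p : ℝ × ℝ) : bczMap p = bczLinearEquiv ⌊(1 + p.1) / p.2⌋ p :=
  rfl

theorem measurable_bczIndex : Measurable fun p : ℝ × ℝ => ⌊(1 + p.1) / p.2⌋ :=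
  ((measurable_const.add measurable_fst).div measurable_snd).floor

theorem swap_mem_fareyTriangle {p : ℝ × ℝ} (hp : p ∈ fareyTriangle) : p.swap ∈ fareyTriangle :=
  ⟨hp.2.1, hp.1, by rw [add_comm]; exact hp.2.2⟩

theorem bczMap_mem_fareyTriangle {p : ℝ × ℝ} (hp : p ∈ fareyTriangle) :
    bczMap p ∈ fareyTriangle := by
  obtain ⟨⟨hx0, hx1⟩, ⟨hy0, hy1⟩, hxy⟩ := hp
  have hle : (⌊(1 + p.1) / p.2⌋ : ℝ) * p.2 ≤ 1 + p.1 :=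
    (le_div_iff₀ hy0).1 (Int.floor_le _)
  have hlt : 1 + p.1 < (⌊(1 + p.1) / p.2⌋ + 1 : ℝ) * p.2 :=
    (div_lt_iff₀ hy0).1 (Int.lt_floor_add_one _)
  refine ⟨⟨hy0, hy1⟩, ⟨?_, ?_⟩, ?_⟩ <;> simp only [bczMap] <;> linarith

theorem bczIndex_bczMap {p : ℝ × ℝ} (hp : p ∈ fareyTriangle) :
    ⌊(1 + (bczMap p).2) / (bczMap p).1⌋ = ⌊(1 + p.1) / p.2⌋ := by
  obtain ⟨⟨-, hx1⟩, ⟨hy0, -⟩, hxy⟩ := hp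
  have hsplit : (1 + (bczMap p).2) / (bczMap p).1 = ⌊(1 + p.1) / p.2⌋ + (1 - p.1) / p.2 := by
    simp only [bczMap]; field_simp; ring
  have hfrac : ⌊(1 - p.1) / p.2⌋ = 0 :=
    Int.floor_eq_zero_iff.2 ⟨div_nonneg (by linarith) hy0.le, (div_lt_one hy0).2 (by linarith)⟩
  rw [hsplit, Int.floor_intCast_add, hfrac, add_zero]

theorem swap_bczMap_swap_bczMap {p : ℝ × ℝ} (hp : p ∈ fareyTriangle) :
    (bczMap (bczMap p).swap).swap = p := by
  have hk := bczIndex_bczMap hp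
  simp only [bczMap, Prod.swap_prod_mk] at hk ⊢
  rw [hk]
  ext <;> simp

theorem bczMap_invOn :
    InvOn (Prod.swap ∘ bczMap ∘ Prod.swap) bczMap fareyTriangle fareyTriangle := by
  refine ⟨fun p hp => swap_bczMap_swap_bczMap hp, fun q hq => ?_⟩
  have h := congrArg Prod.swap (swap_bczMap_swap_bczMap (swap_mem_fareyTriangle hq))
  simpa using h

theorem bczMap_bijOn : BijOn bczMap fareyTriangle fareyTriangle :=
  bczMap_invOn.bijOn (fun _ => bczMap_mem_fareyTriangle)
    fun _ hq => swap_mem_fareyTriangle (bczMap_mem_fareyTriangle (swap_mem_fareyTriangle hq))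

/-- `T` maps the Farey triangle bijectively onto itself and preserves
two-dimensional Lebesgue measure. -/
theorem bczMap_bijOn_measurePreserving :
    Set.BijOn bczMap fareyTriangle fareyTriangle ∧
      ∀ s ⊆ fareyTriangle, MeasurableSet s → volume (bczMap '' s) = volume s :=
  ⟨bczMap_bijOn, fun _ hsT hs =>
    measure_image_eq_of_injOn_of_eq_piecewise hs measurable_bczIndex (bczMap_bijOn.injOn.mono hsT)
      (fun p _ => bczMap_eq_bczLinearEquiv p)
      (fun k => (bczLinearEquiv k).toHomeomorph.measurableEmbedding) volume_image_bczLinearEquiv⟩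
end

section
/- If q_i, q_{i+1}, q_{i+2} are denominators of three consecutive elements of the Farey sequence F_Q, then T(q_i/Q, q_{i+1}/Q) = (q_{i+1}/Q, q_{i+2}/Q), where T(x,y) = (y, ⌊(1+x)/y⌋·y − x). -/
open scoped BigOperators

/-- The Farey set of order `Q`: rationals in `(0,1]` with denominator at most `Q`. -/
def fareySet (Q : ℕ) : Set ℚ := {x | 0 < x ∧ x ≤ 1 ∧ x.den ≤ Q}

/-- `x < y` are consecutive elements of the Farey sequence of order `Q`. -/
def FareyConsecutive (Q : ℕ) (x y : ℚ) : Prop :=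
  x ∈ fareySet Q ∧ y ∈ fareySet Q ∧ x < y ∧ ∀ z ∈ fareySet Q, ¬(x < z ∧ z < y)

/-- Bezout-type construction of the next Farey candidate denominator. -/
lemma next_exists (a b Q : ℤ) (hb : 0 < b) (hcop : Int.gcd a b = 1) (hbQ : b ≤ Q) :
    ∃ c d : ℤ, b * c - a * d = 1 ∧ Q - b < d ∧ d ≤ Q := by
  have hbez : b * Int.gcdB a b - a * (-Int.gcdA a b) = 1 := by
    have h := Int.gcd_eq_gcd_ab a b
    rw [hcop] at h
    push_cast at h
    linarith
  have h1 := Int.emod_nonneg (Q - -Int.gcdA a b) (by omega : b ≠ 0)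
  have h2 := Int.emod_lt_of_pos (Q - -Int.gcdA a b) hb
  have h3 : ((Q - -Int.gcdA a b) / b) * b = (Q - -Int.gcdA a b) - (Q - -Int.gcdA a b) % b := by
    have h4 := Int.mul_ediv_add_emod (Q - -Int.gcdA a b) b
    linarith [mul_comm ((Q - -Int.gcdA a b) / b) b]
  refine ⟨Int.gcdB a b + ((Q - -Int.gcdA a b) / b) * a,
    -Int.gcdA a b + ((Q - -Int.gcdA a b) / b) * b, by ring_nf; linarith [hbez],
    by linarith, by linarith⟩

lemma rat_lt_iff (x : ℚ) (p q : ℤ) (hq : 0 < q) : x < (p : ℚ) / q ↔ x.num * q < p * x.den := by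
  conv_lhs => rw [show x = (x.num : ℚ) / (x.den : ℚ) from (Rat.num_div_den x).symm]
  rw [div_lt_div_iff₀ (by exact_mod_cast x.pos) (by exact_mod_cast hq)]
  exact_mod_cast Iff.rfl

lemma farey_key (Q : ℕ) (x y : ℚ) (h : FareyConsecutive Q x y) :
    y.num * x.den - x.num * y.den = 1 ∧ (Q : ℤ) < x.den + y.den := by
  obtain ⟨⟨hx0, hx1, hxd⟩, ⟨hy0, hy1, hyd⟩, hxy, hmax⟩ := h
  have hb0 : (0 : ℤ) < (x.den : ℤ) := by exact_mod_cast x.pos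
  have hbQ : (x.den : ℤ) ≤ (Q : ℤ) := by exact_mod_cast hxd
  have ha1 : 1 ≤ x.num := Rat.num_pos.mpr hx0
  have hab : x.num < (x.den : ℤ) := by
    have hx1' : x < 1 := lt_of_lt_of_le hxy hy1
    have h5 : (x.num : ℚ) / (x.den : ℚ) < 1 := by rwa [Rat.num_div_den]
    have h6 := (div_lt_one (by exact_mod_cast x.pos : (0:ℚ) < (x.den:ℚ))).mp h5
    exact_mod_cast h6
  obtain ⟨c, d, huni, hdlo, hdhi⟩ := next_exists x.num (x.den : ℤ) Q hb0 x.reduced hbQ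
  have hd0 : 0 < d := by omega
  have hdQ0 : (0 : ℚ) < (d : ℚ) := by exact_mod_cast hd0
  have hxw : x < (c : ℚ) / d := by
    rw [rat_lt_iff x c d hd0]; nlinarith [huni]
  have hw1 : ((c : ℚ) / d) ≤ 1 := by
    rw [div_le_one hdQ0]
    have : c ≤ d := by nlinarith [huni]
    exact_mod_cast this
  have hwden : ((c : ℚ) / d).den ≤ Q := by
    have hdvd : ((((c : ℚ) / d).den : ℤ)) ∣ d := by
      rw [← Rat.divInt_eq_div]; exact Rat.den_dvd c d
    have := Int.le_of_dvd hd0 hdvd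
    omega
  have hwF : ((c : ℚ) / d) ∈ fareySet Q := ⟨lt_trans hx0 hxw, hw1, hwden⟩
  have hyw : ¬ ((c : ℚ) / d) < y := fun hlt => hmax _ hwF ⟨hxw, hlt⟩
  have hcopcd : IsCoprime c d := ⟨(x.den : ℤ), -x.num, by linarith [huni]⟩
  have hq0 : (0 : ℤ) < (y.den : ℤ) := by exact_mod_cast y.pos
  have hqQ : (y.den : ℤ) ≤ (Q : ℤ) := by exact_mod_cast hyd
  have hyeq : y = (c : ℚ) / d := by
    rcases lt_or_eq_of_le (not_lt.mp hyw) with hlt | heq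
    · exfalso
      have h1 : x.num * y.den < y.num * x.den := by
        have h7 := (rat_lt_iff x y.num (y.den : ℤ) hq0).mp
          (by rwa [show ((y.num : ℚ) / ((y.den : ℤ) : ℚ)) = y by exact_mod_cast Rat.num_div_den y])
        exact h7
      have h2 : y.num * d < c * y.den := (rat_lt_iff y c d hd0).mp hlt
      nlinarith [huni, h1, h2, hb0, hd0, hdlo]
    · exact heq
  have hcross : y.num * d = c * (y.den : ℤ) := by
    have h1 : (y.num : ℚ) / (y.den : ℚ) = (c : ℚ) / (d : ℚ) := by
      rw [Rat.num_div_den]; exact_mod_cast hyeq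
    have h8 := (div_eq_div_iff (by exact_mod_cast hq0.ne' : ((y.den : ℚ)) ≠ 0) hdQ0.ne').mp h1
    exact_mod_cast h8
  have hcopy : IsCoprime y.num ((y.den : ℤ)) := Int.isCoprime_iff_gcd_eq_one.mpr y.reduced
  have hdq : d = (y.den : ℤ) := by
    have hd1 : d ∣ (y.den : ℤ) := by
      have hdvd : d ∣ y.num * d := dvd_mul_left d y.num
      rw [hcross] at hdvd
      exact hcopcd.symm.dvd_of_dvd_mul_left hdvd
    have hd2 : ((y.den : ℤ)) ∣ d := by
      have hdvd : ((y.den : ℤ)) ∣ y.num * d := by rw [hcross]; exact dvd_mul_left _ _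
      exact hcopy.symm.dvd_of_dvd_mul_left hdvd
    exact Int.dvd_antisymm hd0.le hq0.le hd1 hd2
  have hcnum : c = y.num := by
    have h1 := hcross; rw [hdq] at h1
    exact (mul_right_cancel₀ hq0.ne' h1).symm
  constructor
  · rw [← hcnum, ← hdq]; linarith [huni]
  · omega

/-- For three consecutive elements of `F_Q` with denominators `q_i, q_{i+1}, q_{i+2}`,
one has `T(q_i/Q, q_{i+1}/Q) = (q_{i+1}/Q, q_{i+2}/Q)`. -/
theorem bczMap_consecutive_denominators (Q : ℕ) (x y z : ℚ)
    (hxy : FareyConsecutive Q x y) (hyz : FareyConsecutive Q y z) :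
    bczMap ((x.den : ℝ) / Q, (y.den : ℝ) / Q) = ((y.den : ℝ) / Q, (z.den : ℝ) / Q) := by
  obtain ⟨h1, h1Q⟩ := farey_key Q x y hxy
  obtain ⟨h2, h2Q⟩ := farey_key Q y z hyz
  have hfQ : (z.den : ℤ) ≤ (Q : ℤ) := by exact_mod_cast hyz.2.1.2.2
  have hb0 : (0 : ℤ) < (x.den : ℤ) := by exact_mod_cast x.pos
  have hd0 : (0 : ℤ) < (y.den : ℤ) := by exact_mod_cast y.pos
  have hf0 : (0 : ℤ) < (z.den : ℤ) := by exact_mod_cast z.pos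
  have hQ0 : (0 : ℤ) < (Q : ℤ) := lt_of_lt_of_le hb0 (by exact_mod_cast hxy.1.2.2)
  have hcd : IsCoprime y.num ((y.den : ℤ)) :=
    Int.isCoprime_iff_gcd_eq_one.mpr y.reduced
  have hdvd : ((y.den : ℤ)) ∣ ((x.den : ℤ) + (z.den : ℤ)) := by
    have hmul : y.num * ((x.den : ℤ) + (z.den : ℤ)) = (y.den : ℤ) * (x.num + z.num) := by
      linarith [h1, h2]
    have : ((y.den : ℤ)) ∣ y.num * ((x.den : ℤ) + (z.den : ℤ)) := ⟨x.num + z.num, hmul⟩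
    exact hcd.symm.dvd_of_dvd_mul_left this
  obtain ⟨k, hk⟩ := hdvd
  -- bounds for k
  have hklo : (Q : ℤ) + (x.den : ℤ) - (y.den : ℤ) < (y.den : ℤ) * k := by omega
  have hkhi : (y.den : ℤ) * k ≤ (Q : ℤ) + (x.den : ℤ) := by omega
  -- real facts
  have hQR : (0 : ℝ) < (Q : ℝ) := by exact_mod_cast hQ0
  have hdR : (0 : ℝ) < ((y.den : ℕ) : ℝ) := by exact_mod_cast hd0
  have hrw : (1 + (x.den : ℝ) / Q) / ((y.den : ℝ) / Q) = ((Q : ℝ) + (x.den : ℝ)) / (y.den : ℝ) := by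
    field_simp
  have hfloor : ⌊(1 + (x.den : ℝ) / Q) / ((y.den : ℝ) / Q)⌋ = k := by
    rw [hrw, Int.floor_eq_iff]
    constructor
    · rw [le_div_iff₀ hdR]
      have : ((y.den : ℕ) : ℝ) * (k : ℝ) ≤ (Q : ℝ) + ((x.den : ℕ) : ℝ) := by
        exact_mod_cast hkhi
      push_cast at this ⊢
      linarith
    · rw [div_lt_iff₀ hdR]
      have : (Q : ℝ) + ((x.den : ℕ) : ℝ) < ((y.den : ℕ) : ℝ) * ((k : ℝ) + 1) := by
        have h9 : (Q : ℤ) + (x.den : ℤ) < (y.den : ℤ) * (k + 1) := by nlinarith [hklo]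
        exact_mod_cast h9
      push_cast at this ⊢
      linarith
  simp only [bczMap, Prod.mk.injEq]
  refine ⟨trivial, ?_⟩
  rw [hfloor]
  have hfk : (z.den : ℤ) = (y.den : ℤ) * k - (x.den : ℤ) := by omega
  have hfkR : ((z.den : ℕ) : ℝ) = ((y.den : ℕ) : ℝ) * (k : ℝ) - ((x.den : ℕ) : ℝ) := by
    exact_mod_cast hfk
  push_cast at hfkR ⊢
  field_simp
  linarith [hfkR]
end

section
/- Let T(x,y) = (y, κ(x,y)y − x) with κ(x,y) = ⌊(1+x)/y⌋ on the Farey triangle T = {(x,y) ∈ (0,1]² : x+y > 1}, and let T_k = {(x,y) ∈ T : κ(x,y) = k}. Then for every k ≥ 5, T(T_k) ⊆ T_1. -/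
/-- For every `k ≥ 5`, `T(𝒯_k) ⊆ 𝒯_1`. -/
theorem bczMap_image_TK_subset (k : ℤ) (hk : 5 ≤ k) :
    bczMap '' fareyTriangleK k ⊆ fareyTriangleK 1 := by
  rintro q ⟨⟨x, y⟩, ⟨⟨hx, hy, hsum⟩, hfloor⟩, rfl⟩
  simp only [Set.mem_Ioc] at hx hy
  obtain ⟨hx0, hx1⟩ := hx
  obtain ⟨hy0, hy1⟩ := hy
  simp only at hsum hfloor
  have hk' : (5:ℝ) ≤ (k:ℝ) := by exact_mod_cast hk
  have h1 : (k:ℝ) * y ≤ 1 + x := by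
    have := hfloor ▸ Int.floor_le ((1 + x) / y)
    exact (le_div_iff₀ hy0).mp this
  have h2 : 1 + x < ((k:ℝ) + 1) * y := by
    have := hfloor ▸ Int.lt_floor_add_one ((1 + x) / y)
    push_cast at this
    exact (div_lt_iff₀ hy0).mp this
  set t : ℝ := (k:ℝ) * y - x with ht
  have hy25 : y ≤ 2/5 := by nlinarith
  have ht1 : t ≤ 1 := by nlinarith
  have htlb : 1 - y < t := by nlinarith
  have ht0 : 0 < t := by nlinarith
  have h2t : 1 + y < 2 * t := by
    rcases le_or_gt y (1/3) with h | h
    · nlinarith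
    · nlinarith [mul_nonneg (by linarith : (0:ℝ) ≤ (k:ℝ) - 5)
        (by linarith : (0:ℝ) ≤ y - 1/3)]
  have hgoal : bczMap (x, y) = (y, t) := by
    simp [bczMap, hfloor, ht]
  rw [hgoal]
  refine ⟨⟨⟨hy0, hy1⟩, ⟨ht0, ht1⟩, by simp; linarith⟩, ?_⟩
  show ⌊(1 + y) / t⌋ = 1
  rw [Int.floor_eq_iff]
  constructor
  · rw [le_div_iff₀ ht0]; push_cast; linarith
  · rw [div_lt_iff₀ ht0]; push_cast; linarith
end

section
/- Let T(x,y) = (y, κ(x,y)y − x) with κ(x,y) = ⌊(1+x)/y⌋ on the Farey triangle, and T_k = {κ = k}. Then T(T_3 ∪ T_4) ⊆ T_1 ∪ T_2 and T(T_2) ⊆ T_1 ∪ T_2 ∪ T_3 ∪ T_4. -/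
lemma bcz_step {x y : ℝ} {k b : ℤ} (hx : 0 < x) (hx1 : x ≤ 1) (hy : 0 < y)
    (hy1 : y ≤ 1) (hxy : 1 < x + y) (hk : ⌊(1 + x) / y⌋ = k)
    (hb : 1 + y < ((b : ℝ) + 1) * ((k : ℝ) * y - x)) :
    ∃ m : ℤ, 1 ≤ m ∧ m ≤ b ∧ bczMap (x, y) ∈ fareyTriangleK m := by
  have hky : (k : ℝ) * y ≤ 1 + x := by
    have h := Int.floor_le ((1 + x) / y)
    rw [hk, le_div_iff₀ hy] at h
    linarith
  have hky2 : 1 + x < ((k : ℝ) + 1) * y := by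
    have h := Int.lt_floor_add_one ((1 + x) / y)
    rw [hk, div_lt_iff₀ hy] at h
    push_cast at h ⊢
    linarith
  set u := (k : ℝ) * y - x with hu
  have hu0 : 0 < u := by nlinarith
  have hu1 : u ≤ 1 := by nlinarith
  have hyu : 1 < y + u := by nlinarith
  have h1 : (1 : ℝ) ≤ (1 + y) / u := by
    rw [le_div_iff₀ hu0]; nlinarith
  have h2 : (1 + y) / u < (b : ℝ) + 1 := by
    rw [div_lt_iff₀ hu0]; linarith
  refine ⟨⌊(1 + y) / u⌋, ?_, ?_, ?_⟩
  · exact Int.le_floor.mpr (by exact_mod_cast h1)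
  · have : ⌊(1 + y) / u⌋ < b + 1 := Int.floor_lt.mpr (by push_cast; linarith)
    omega
  · have heq : bczMap (x, y) = (y, u) := by simp [bczMap, hk, hu]
    rw [heq]
    exact ⟨⟨⟨hy, hy1⟩, ⟨hu0, hu1⟩, hyu⟩, rfl⟩

/-- `T(𝒯_3 ∪ 𝒯_4) ⊆ 𝒯_1 ∪ 𝒯_2` and `T(𝒯_2) ⊆ 𝒯_1 ∪ 𝒯_2 ∪ 𝒯_3 ∪ 𝒯_4`. -/
theorem bczMap_image_T34_T2 :
    bczMap '' (fareyTriangleK 3 ∪ fareyTriangleK 4) ⊆ fareyTriangleK 1 ∪ fareyTriangleK 2 ∧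
      bczMap '' fareyTriangleK 2 ⊆
        fareyTriangleK 1 ∪ fareyTriangleK 2 ∪ fareyTriangleK 3 ∪ fareyTriangleK 4 := by
  constructor
  · rintro q ⟨⟨x, y⟩, hp | hp, rfl⟩
    · obtain ⟨⟨⟨hx, hx1⟩, ⟨hy, hy1⟩, hxy⟩, hk⟩ := hp
      have h2 := Int.lt_floor_add_one ((1 + x) / y)
      rw [hk, div_lt_iff₀ hy] at h2
      have hb : 1 + y < (((2:ℤ):ℝ) + 1) * (((3:ℤ):ℝ) * y - x) := by
        push_cast at h2 ⊢
        rcases le_or_gt y (1/2) with h | h <;> nlinarith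
      obtain ⟨m, hm1, hm2, hmem⟩ := bcz_step hx hx1 hy hy1 hxy hk hb
      interval_cases m
      · exact Or.inl hmem
      · exact Or.inr hmem
    · obtain ⟨⟨⟨hx, hx1⟩, ⟨hy, hy1⟩, hxy⟩, hk⟩ := hp
      have h1 := Int.floor_le ((1 + x) / y)
      rw [hk, le_div_iff₀ hy] at h1
      have h2 := Int.lt_floor_add_one ((1 + x) / y)
      rw [hk, div_lt_iff₀ hy] at h2
      have hb : 1 + y < (((2:ℤ):ℝ) + 1) * (((4:ℤ):ℝ) * y - x) := by
        push_cast at h1 h2 ⊢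
        nlinarith
      obtain ⟨m, hm1, hm2, hmem⟩ := bcz_step hx hx1 hy hy1 hxy hk hb
      interval_cases m
      · exact Or.inl hmem
      · exact Or.inr hmem
  · rintro q ⟨⟨x, y⟩, hp, rfl⟩
    obtain ⟨⟨⟨hx, hx1⟩, ⟨hy, hy1⟩, hxy⟩, hk⟩ := hp
    have h2 := Int.lt_floor_add_one ((1 + x) / y)
    rw [hk, div_lt_iff₀ hy] at h2
    have hb : 1 + y < (((4:ℤ):ℝ) + 1) * (((2:ℤ):ℝ) * y - x) := by
      push_cast at h2 ⊢
      rcases le_or_gt y (2/3) with h | h <;> nlinarith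
    obtain ⟨m, hm1, hm2, hmem⟩ := bcz_step hx hx1 hy hy1 hxy hk hb
    interval_cases m <;> simp only [Set.mem_union] <;> tauto
end

section
/- Let d = p^α q^β be a product of two prime powers (p, q distinct primes). Then among any 6 consecutive denominators q_i, q_{i+1}, ..., q_{i+5} of consecutive elements of the Farey sequence F_Q, at least one is coprime to d. -/
theorem Nat.dvd_or_dvd_of_not_coprime_pow_mul_pow {p q n : ℕ} (hp : p.Prime) (hq : q.Prime)
    (α β : ℕ) (h : ¬ n.Coprime (p ^ α * q ^ β)) : p ∣ n ∨ q ∣ n := by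
  contrapose! h
  exact ((hp.coprime_iff_not_dvd.2 h.1).symm.pow_right α).mul_right
    ((hq.coprime_iff_not_dvd.2 h.2).symm.pow_right β)

theorem Int.exists_mem_Ioc_dvd_mul_add_one {a b : ℤ} (hab : IsCoprime a b) (hb : 0 < b) (Q : ℤ) :
    ∃ t, Q - b < t ∧ t ≤ Q ∧ b ∣ a * t + 1 := by
  obtain ⟨u, v, huv⟩ := hab
  refine ⟨Q - (Q + u) % b, by linarith [Int.emod_lt_of_pos (Q + u) hb],
    by linarith [Int.emod_nonneg (Q + u) hb.ne'], a * ((Q + u) / b) + v, ?_⟩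
  linear_combination (-a) * Int.emod_def (Q + u) b - huv

theorem Rat.den_add_den_le_of_lt_of_lt {x y z : ℚ} (hdet : (x.den : ℤ) * z.num - z.den * x.num = 1)
    (hxy : x < y) (hyz : y < z) : x.den + z.den ≤ y.den := by
  rw [Rat.lt_iff] at hxy hyz
  have hleft : 1 ≤ (x.den : ℤ) * y.num - y.den * x.num := by linarith
  have hright : 1 ≤ (y.den : ℤ) * z.num - z.den * y.num := by linarith
  have hsplit : (y.den : ℤ) = z.den * (x.den * y.num - y.den * x.num)
      + x.den * (y.den * z.num - z.den * y.num) := by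
    linear_combination (-(y.den : ℤ)) * hdet
  have : (x.den : ℤ) + z.den ≤ y.den := by
    nlinarith [mul_le_mul_of_nonneg_left hleft (Int.natCast_nonneg z.den),
      mul_le_mul_of_nonneg_left hright (Int.natCast_nonneg x.den)]
  exact_mod_cast this

theorem exists_fareySet_successor {Q : ℕ} {x : ℚ} (hx : x ∈ fareySet Q) (hx1 : x < 1) :
    ∃ z ∈ fareySet Q, x < z ∧ (x.den : ℤ) * z.num - z.den * x.num = 1 ∧ Q < x.den + z.den := by
  have hb : (0 : ℤ) < x.den := by exact_mod_cast x.pos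
  have ha : 0 < x.num := Rat.num_pos.2 hx.1
  have hab : x.num < x.den := Rat.num_lt_denom_iff.2 hx1
  have hbQ : (x.den : ℤ) ≤ Q := by exact_mod_cast hx.2.2
  have hcop : IsCoprime x.num x.den := Int.isCoprime_iff_nat_coprime.2 (by simpa using x.reduced)
  obtain ⟨t, hQt, htQ, c, hc⟩ := Int.exists_mem_Ioc_dvd_mul_add_one hcop hb Q
  have ht : 0 < t := by linarith
  have hc0 : 0 < c := by nlinarith
  have hct : c ≤ t := by nlinarith
  have hcopct : c.natAbs.Coprime t.natAbs :=
    Int.isCoprime_iff_nat_coprime.1 ⟨x.den, -x.num, by linear_combination -hc⟩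
  have hnum := Rat.num_div_eq_of_coprime ht hcopct
  have hden := Rat.den_div_eq_of_coprime ht hcopct
  refine ⟨c / t, ⟨by positivity, div_le_one_of_le₀ (by exact_mod_cast hct) (by positivity), ?_⟩,
    ?_, ?_, ?_⟩
  · zify
    omega
  · rw [Rat.lt_iff, hnum, hden]
    linarith
  · rw [hnum, hden]
    linarith
  · zify
    omega

namespace FareyConsecutive

variable {Q : ℕ} {x y z : ℚ}

theorem det_eq_one_and_lt_den_add_den (h : FareyConsecutive Q x y) :
    (x.den : ℤ) * y.num - y.den * x.num = 1 ∧ Q < x.den + y.den := by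
  obtain ⟨hx, hy, hxy, hbetween⟩ := h
  obtain ⟨z, hz, hxz, hdet, hQ⟩ := exists_fareySet_successor hx (hxy.trans_le hy.2.1)
  obtain rfl : y = z := by
    refine le_antisymm (not_lt.1 fun hzy => hbetween z hz ⟨hxz, hzy⟩) (not_lt.1 fun hzy => ?_)
    have := Rat.den_add_den_le_of_lt_of_lt hdet hxy hzy
    have := hy.2.2
    omega
  exact ⟨hdet, hQ⟩

theorem coprime_den (h : FareyConsecutive Q x y) : x.den.Coprime y.den :=
  Nat.isCoprime_iff_coprime.1
    ⟨y.num, -x.num, by linear_combination h.det_eq_one_and_lt_den_add_den.1⟩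

theorem den_dvd_den_add_den (hxy : FareyConsecutive Q x y) (hyz : FareyConsecutive Q y z) :
    y.den ∣ x.den + z.den := by
  refine Int.natCast_dvd_natCast.1 ⟨x.den * z.num - z.den * x.num, ?_⟩
  push_cast
  linear_combination -(z.den : ℤ) * hxy.det_eq_one_and_lt_den_add_den.1
    - (x.den : ℤ) * hyz.det_eq_one_and_lt_den_add_den.1

theorem mul_den_le_of_dvd {r : ℕ} (hxy : FareyConsecutive Q x y) (hyz : FareyConsecutive Q y z)
    (hx : r ∣ x.den) (hz : r ∣ z.den) : r * y.den ≤ x.den + z.den :=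
  Nat.le_of_dvd (by positivity) <| (Nat.Coprime.coprime_dvd_left hx hxy.coprime_den)
    |>.mul_dvd_of_dvd_of_dvd (dvd_add hx hz) (hxy.den_dvd_den_add_den hyz)

theorem dvd_den_of_dvd_den {r s : ℕ} (h : FareyConsecutive Q x y) (hr : r ≠ 1)
    (hx : r ∣ x.den) (hy : r ∣ y.den ∨ s ∣ y.den) : s ∣ y.den :=
  hy.resolve_left fun hry => hr ((Nat.Coprime.coprime_dvd_left hx h.coprime_den).eq_one_of_dvd hry)

theorem false_of_alternating_dvd_den {r s : ℕ} {x₀ x₁ x₂ x₃ x₄ : ℚ}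
    (h₀₁ : FareyConsecutive Q x₀ x₁) (h₁₂ : FareyConsecutive Q x₁ x₂)
    (h₂₃ : FareyConsecutive Q x₂ x₃) (h₃₄ : FareyConsecutive Q x₃ x₄) (hr : 3 ≤ r) (hs : 2 ≤ s)
    (h₀ : r ∣ x₀.den) (h₁ : s ∣ x₁.den) (h₂ : r ∣ x₂.den) (h₃ : s ∣ x₃.den) (h₄ : r ∣ x₄.den) :
    False := by
  have k₁ := (Nat.mul_le_mul_right x₁.den hr).trans (mul_den_le_of_dvd h₀₁ h₁₂ h₀ h₂)
  have k₂ := (Nat.mul_le_mul_right x₂.den hs).trans (mul_den_le_of_dvd h₁₂ h₂₃ h₁ h₃)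
  have k₃ := (Nat.mul_le_mul_right x₃.den hr).trans (mul_den_le_of_dvd h₂₃ h₃₄ h₂ h₄)
  have := h₁₂.det_eq_one_and_lt_den_add_den.2
  have := h₂₃.det_eq_one_and_lt_den_add_den.2
  have := h₀₁.1.2.2
  have := h₃₄.2.1.2.2
  -- `k₁ + k₃` and `k₂` give `b₁ + b₃ ≤ Q`, while `k₂` and the two lower bounds give `b₁ + b₃ > Q`.
  omega

end FareyConsecutive

theorem FareyConsecutive.false_of_dvd_den_six {Q r s : ℕ} {f : Fin 6 → ℚ}
    (hf : ∀ i : Fin 5, FareyConsecutive Q (f i.castSucc) (f i.succ))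
    (hr : r.Prime) (hs : s.Prime) (hrs : r ≠ s) (hdvd : ∀ i, r ∣ (f i).den ∨ s ∣ (f i).den)
    (h₀ : r ∣ (f 0).den) : False := by
  have h₁ := (hf 0).dvd_den_of_dvd_den hr.ne_one h₀ (hdvd 1)
  have h₂ := (hf 1).dvd_den_of_dvd_den hs.ne_one h₁ (hdvd 2).symm
  have h₃ := (hf 2).dvd_den_of_dvd_den hr.ne_one h₂ (hdvd 3)
  have h₄ := (hf 3).dvd_den_of_dvd_den hs.ne_one h₃ (hdvd 4).symm
  have h₅ := (hf 4).dvd_den_of_dvd_den hr.ne_one h₄ (hdvd 5)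
  have hr₂ := hr.two_le
  have hs₂ := hs.two_le
  obtain hr₃ | hs₃ : 3 ≤ r ∨ 3 ≤ s := by omega
  · exact false_of_alternating_dvd_den (hf 0) (hf 1) (hf 2) (hf 3) hr₃ hs₂ h₀ h₁ h₂ h₃ h₄
  · exact false_of_alternating_dvd_den (hf 1) (hf 2) (hf 3) (hf 4) hs₃ hr₂ h₁ h₂ h₃ h₄ h₅

theorem farey_six_consecutive_coprime_general (Q : ℕ) (p q α β : ℕ)
    (hp : p.Prime) (hq : q.Prime) (hpq : p ≠ q)
    (f : Fin 6 → ℚ) (hf : ∀ i : Fin 5, FareyConsecutive Q (f i.castSucc) (f i.succ)) :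
    ∃ i : Fin 6, Nat.Coprime (f i).den (p ^ α * q ^ β) := by
  by_contra! hcop
  have hdvd i : p ∣ (f i).den ∨ q ∣ (f i).den :=
    Nat.dvd_or_dvd_of_not_coprime_pow_mul_pow hp hq α β (hcop i)
  rcases hdvd 0 with h₀ | h₀
  · exact FareyConsecutive.false_of_dvd_den_six hf hp hq hpq hdvd h₀
  · exact FareyConsecutive.false_of_dvd_den_six hf hq hp hpq.symm (fun i => (hdvd i).symm) h₀

/-- If `d = p^α q^β` with `p ≠ q` primes, then among any six consecutive
elements of `F_Q`, at least one has denominator coprime to `d`. -/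
theorem farey_six_consecutive_coprime (Q : ℕ) (p q α β : ℕ)
    (hp : p.Prime) (hq : q.Prime) (hpq : p ≠ q) (hα : 0 < α) (hβ : 0 < β)
    (f : Fin 6 → ℚ) (hf : ∀ i : Fin 5, FareyConsecutive Q (f i.castSucc) (f i.succ)) :
    ∃ i : Fin 6, Nat.Coprime (f i).den (p ^ α * q ^ β) :=
  farey_six_consecutive_coprime_general Q p q α β hp hq hpq f hf
end
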